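/- Let n ≥ 1 be an integer and C₀ > 0, C₁ > 0, c > 0. Then there exist τ > 0, C' > 0 and h₀ ∈ (0,1] (depending only on n, C₀, C₁, c) with the following property: for every h ∈ (0,h₀] and every family of complex numbers (a_α)_{α∈ℕⁿ} with |a_α| ≤ C₀^{|α|}(h^{-1}+|α|)^{|α|}·e^{-c/h} for all α ∈ ℕⁿ, and every ζ ∈ ℂⁿ with max_i |ζ_i| ≤ τ, the series ∑_{α∈ℕⁿ} a_α ζ^α/α! converges absolutely and |∑_{α∈ℕⁿ} a_α ζ^α/α!| ≤ e^{-C'/h}. -/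

import Mathlib

/-!
Write `k = |α|` and `s = h⁻¹ + k`. The elementary bound `s^m / m! ≤ e^{ts} / t^m`, applied
in each coordinate with `t = c / (2(n+1))`, gives
`s^k / α! ≤ e^{cs/2} t^{-k} = e^{c/(2h)} (e^{c/2}/t)^k`.
Half of the decay `e^{-c/h}` absorbs `e^{c/(2h)}`, and for `τ` small the remaining geometric
factor is `2^{-k}`. The series is therefore dominated by
`e^{-c/(2h)} ∑_α 2^{-|α|} = 2^n e^{-c/(2h)}`, which is at most `e^{-c/(4h)}` once
`h ≤ c / (4(n+1))`.
-/

open Real Finset Nat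

theorem sum_prod_apply_le_tsum_pow {ι β : Type*} [Fintype ι] [DecidableEq ι] [DecidableEq β]
    {f : β → ℝ} (hf : 0 ≤ f) (hfs : Summable f) (s : Finset (ι → β)) :
    ∑ α ∈ s, ∏ i, f (α i) ≤ (∑' b, f b) ^ Fintype.card ι := by
  have hs : s ⊆ Fintype.piFinset fun i => s.image (· i) := fun α hα => by
    simpa [Fintype.mem_piFinset] using fun i => ⟨α, hα, rfl⟩
  calc ∑ α ∈ s, ∏ i, f (α i)
      ≤ ∑ α ∈ Fintype.piFinset fun i => s.image (· i), ∏ i, f (α i) :=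
        sum_le_sum_of_subset_of_nonneg hs fun _ _ _ => prod_nonneg fun i _ => hf _
    _ = ∏ i, ∑ b ∈ s.image (· i), f b := (prod_univ_sum _ fun _ => f).symm
    _ ≤ ∏ _i : ι, ∑' b, f b :=
        prod_le_prod (fun _ _ => sum_nonneg fun _ _ => hf _)
          fun _ _ => hfs.sum_le_tsum _ fun _ _ => hf _
    _ = (∑' b, f b) ^ Fintype.card ι := by rw [prod_const, Finset.card_univ]

theorem summable_norm_and_norm_tsum_le_of_norm_le_prod {ι β E : Type*} [Fintype ι]
    [DecidableEq ι] [DecidableEq β] [NormedAddCommGroup E] [CompleteSpace E]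
    {g : (ι → β) → E} {f : β → ℝ} {M : ℝ} (hM : 0 ≤ M) (hf : 0 ≤ f) (hfs : Summable f)
    (hg : ∀ α, ‖g α‖ ≤ M * ∏ i, f (α i)) :
    Summable (fun α => ‖g α‖) ∧ ‖∑' α, g α‖ ≤ M * (∑' b, f b) ^ Fintype.card ι := by
  have hsum (s : Finset (ι → β)) : ∑ α ∈ s, ‖g α‖ ≤ M * (∑' b, f b) ^ Fintype.card ι :=
    calc ∑ α ∈ s, ‖g α‖
        ≤ ∑ α ∈ s, M * ∏ i, f (α i) := sum_le_sum fun α _ => hg α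
      _ ≤ M * (∑' b, f b) ^ Fintype.card ι := by
        rw [← mul_sum]
        exact mul_le_mul_of_nonneg_left (sum_prod_apply_le_tsum_pow hf hfs s) hM
  have hnorm : Summable (fun α => ‖g α‖) := summable_of_sum_le (fun _ => norm_nonneg _) hsum
  exact ⟨hnorm, (norm_tsum_le_tsum_norm hnorm).trans
    (Real.tsum_le_of_sum_le (fun _ => norm_nonneg _) hsum)⟩

theorem pow_div_factorial_le_exp_mul_div_pow {s t : ℝ} (hs : 0 ≤ s) (ht : 0 < t) (m : ℕ) :
    s ^ m / m ! ≤ exp (t * s) / t ^ m := by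
  have := pow_div_factorial_le_exp (t * s) (by positivity) m
  rw [mul_pow, mul_div_assoc] at this
  rwa [le_div_iff₀ (by positivity), mul_comm]

theorem pow_sum_div_prod_factorial_le {ι : Type*} [Fintype ι] (α : ι → ℕ) {s t : ℝ}
    (hs : 0 ≤ s) (ht : 0 < t) :
    s ^ (∑ i, α i) / ∏ i, ((α i)! : ℝ) ≤ exp (Fintype.card ι * t * s) / t ^ (∑ i, α i) := by
  calc s ^ (∑ i, α i) / ∏ i, ((α i)! : ℝ)
      = ∏ i, s ^ α i / (α i)! := by rw [prod_div_distrib, prod_pow_eq_pow_sum]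
    _ ≤ ∏ i, exp (t * s) / t ^ α i :=
        prod_le_prod (fun _ _ => by positivity)
          fun i _ => pow_div_factorial_le_exp_mul_div_pow hs ht (α i)
    _ = exp (Fintype.card ι * t * s) / t ^ (∑ i, α i) := by
        rw [prod_div_distrib, prod_pow_eq_pow_sum, prod_const, Finset.card_univ, ← exp_nat_mul,
          mul_assoc]

theorem norm_taylor_term_le {ι : Type*} [Fintype ι] {C₀ c h t τ : ℝ} (hC₀ : 0 ≤ C₀)
    (hh : 0 < h) (ht : 0 < t) (hτ : 0 ≤ τ) (htc : Fintype.card ι * t ≤ c / 2) {a : ℂ}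
    {α : ι → ℕ} {ζ : ι → ℂ}
    (ha : ‖a‖ ≤ C₀ ^ (∑ i, α i) * (h⁻¹ + ((∑ i, α i : ℕ) : ℝ)) ^ (∑ i, α i) * exp (-c / h))
    (hζ : ∀ i, ‖ζ i‖ ≤ τ) :
    ‖a * (∏ i, ζ i ^ α i) / ∏ i, ((α i)! : ℂ)‖ ≤
      exp (-c / (2 * h)) * (C₀ * τ * exp (c / 2) / t) ^ (∑ i, α i) := by
  set k := ∑ i, α i
  set s : ℝ := h⁻¹ + k with hs_def
  have hs : 0 ≤ s := by positivity
  have hζα : ∏ i, ‖ζ i‖ ^ α i ≤ τ ^ k := by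
    rw [← prod_pow_eq_pow_sum]
    exact prod_le_prod (fun _ _ => by positivity)
      fun i _ => pow_le_pow_left₀ (norm_nonneg _) (hζ i) _
  have hexp :
      exp (-c / h) * exp (Fintype.card ι * t * s) ≤ exp (-c / (2 * h)) * exp (c / 2) ^ k := by
    rw [← exp_add, ← exp_nat_mul, ← exp_add]
    apply exp_le_exp.mpr
    calc -c / h + Fintype.card ι * t * s ≤ -c / h + c / 2 * s := by gcongr
      _ = -c / (2 * h) + k * (c / 2) := by rw [hs_def]; field_simp; ring
  calc ‖a * (∏ i, ζ i ^ α i) / ∏ i, ((α i)! : ℂ)‖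
      = ‖a‖ * (∏ i, ‖ζ i‖ ^ α i) / ∏ i, ((α i)! : ℝ) := by
        simp only [norm_div, norm_mul, norm_prod, norm_pow, Complex.norm_natCast]
    _ ≤ C₀ ^ k * s ^ k * exp (-c / h) * τ ^ k / ∏ i, ((α i)! : ℝ) := by gcongr
    _ = exp (-c / h) * (C₀ * τ) ^ k * (s ^ k / ∏ i, ((α i)! : ℝ)) := by ring
    _ ≤ exp (-c / h) * (C₀ * τ) ^ k * (exp (Fintype.card ι * t * s) / t ^ k) := by
        gcongr ?_ * ?_
        exact pow_sum_div_prod_factorial_le α hs ht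
    _ = exp (-c / h) * exp (Fintype.card ι * t * s) * (C₀ * τ / t) ^ k := by ring
    _ ≤ exp (-c / (2 * h)) * exp (c / 2) ^ k * (C₀ * τ / t) ^ k := by gcongr
    _ = exp (-c / (2 * h)) * (C₀ * τ * exp (c / 2) / t) ^ k := by ring

theorem exp_neg_div_two_mul_two_pow_le {n : ℕ} {c h : ℝ} (hh : 0 < h)
    (hhc : h ≤ c / (4 * (n + 1))) :
    exp (-c / (2 * h)) * 2 ^ n ≤ exp (-(c / 4) / h) := by
  have hn : (n : ℝ) ≤ c / (4 * h) := by
    rw [le_div_iff₀ (by positivity)]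
    have := (le_div_iff₀ (by positivity)).mp hhc
    nlinarith
  calc exp (-c / (2 * h)) * 2 ^ n
      ≤ exp (-c / (2 * h)) * exp (c / (4 * h)) := by
        gcongr
        calc (2 : ℝ) ^ n ≤ exp 1 ^ n := by gcongr; linarith [add_one_le_exp 1]
          _ = exp n := by rw [← exp_nat_mul, mul_one]
          _ ≤ exp (c / (4 * h)) := exp_le_exp.mpr hn
    _ = exp (-(c / 4) / h) := by rw [← exp_add]; congr 1; field_simp; ring

theorem stmt11_general (n : ℕ) (C₀ c : ℝ)
    (hC₀ : 0 < C₀) (hc : 0 < c) :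
    ∃ τ > (0:ℝ), ∃ C' > (0:ℝ), ∃ h₀ ∈ Set.Ioc (0:ℝ) 1,
      ∀ h ∈ Set.Ioc (0:ℝ) h₀, ∀ a : (Fin n → ℕ) → ℂ,
        (∀ α : Fin n → ℕ, ‖a α‖ ≤
          C₀ ^ (∑ i, α i) * (h⁻¹ + ((∑ i, α i : ℕ) : ℝ)) ^ (∑ i, α i) * Real.exp (-c / h)) →
        ∀ ζ : Fin n → ℂ, (⨆ i, ‖ζ i‖) ≤ τ →
          Summable (fun α : Fin n → ℕ =>
            ‖a α * (∏ i, ζ i ^ α i) / (∏ i, ((α i).factorial : ℂ))‖) ∧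
          ‖∑' α : Fin n → ℕ,
              a α * (∏ i, ζ i ^ α i) / (∏ i, ((α i).factorial : ℂ))‖
            ≤ Real.exp (-C' / h) := by
  set t := c / (2 * (n + 1))
  set τ := t / (2 * C₀ * exp (c / 2))
  have ht : 0 < t := by positivity
  refine ⟨τ, by positivity, c / 4, by positivity, min 1 (c / (4 * (n + 1))),
    ⟨by positivity, min_le_left _ _⟩, ?_⟩
  rintro h ⟨hh, hh₀⟩ a ha ζ hζ
  have hζi : ∀ i, ‖ζ i‖ ≤ τ := fun i => (le_ciSup (Set.finite_range _).bddAbove i).trans hζ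
  have htc : (Fintype.card (Fin n) : ℝ) * t ≤ c / 2 := by
    simp only [t]
    rw [Fintype.card_fin, mul_div_assoc', div_le_div_iff₀ (by positivity) (by positivity)]
    nlinarith
  have hterm : ∀ α, ‖a α * (∏ i, ζ i ^ α i) / ∏ i, ((α i)! : ℂ)‖ ≤
      exp (-c / (2 * h)) * ∏ i, (1 / 2 : ℝ) ^ α i := fun α => by
    have hρ : C₀ * τ * exp (c / 2) / t = 1 / 2 := by
      simp only [τ]; field_simp
    simpa only [hρ, prod_pow_eq_pow_sum] using
      norm_taylor_term_le hC₀.le hh ht (by positivity) htc (ha α) hζi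
  obtain ⟨hsum, hle⟩ := summable_norm_and_norm_tsum_le_of_norm_le_prod (exp_pos _).le
    (fun _ => by positivity) summable_geometric_two hterm
  refine ⟨hsum, hle.trans ?_⟩
  rw [tsum_geometric_two, Fintype.card_fin]
  exact exp_neg_div_two_mul_two_pow_le hh (hh₀.trans (min_le_right _ _))

/-- The exponential-decay conclusion of Theorem 3.2 of Canzani–Toth in local form:
given the semiclassical Cauchy estimates with exponentially small sup-norm
`M = e^{-c/h}`, there are `τ > 0`, `C' > 0` and `h₀` such that for all `h ∈ (0,h₀]`
and all `ζ ∈ ℂⁿ` with `max_i |ζ_i| ≤ τ`, the Taylor series converges absolutely and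
`|∑ a_α ζ^α/α!| ≤ e^{-C'/h}`. -/
theorem stmt11 (n : ℕ) (hn : 1 ≤ n) (C₀ C₁ c : ℝ)
    (hC₀ : 0 < C₀) (hC₁ : 0 < C₁) (hc : 0 < c) :
    ∃ τ > (0:ℝ), ∃ C' > (0:ℝ), ∃ h₀ ∈ Set.Ioc (0:ℝ) 1,
      ∀ h ∈ Set.Ioc (0:ℝ) h₀, ∀ a : (Fin n → ℕ) → ℂ,
        (∀ α : Fin n → ℕ, ‖a α‖ ≤
          C₀ ^ (∑ i, α i) * (h⁻¹ + ((∑ i, α i : ℕ) : ℝ)) ^ (∑ i, α i) * Real.exp (-c / h)) →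
        ∀ ζ : Fin n → ℂ, (⨆ i, ‖ζ i‖) ≤ τ →
          Summable (fun α : Fin n → ℕ =>
            ‖a α * (∏ i, ζ i ^ α i) / (∏ i, ((α i).factorial : ℂ))‖) ∧
          ‖∑' α : Fin n → ℕ,
              a α * (∏ i, ζ i ^ α i) / (∏ i, ((α i).factorial : ℂ))‖
            ≤ Real.exp (-C' / h) :=
  stmt11_general n C₀ c hC₀ hc
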